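/- arXiv:1701.00948 — 4 statements merged into one kernel-verified Lean document; each statement's English description precedes it below -/
import Mathlib

section
/- For every positive integer n, the word w_n = a^n b a^n b a^n (of length 3n+2 over the alphabet {a,b}) contains at least ⌊(n+1)^2/2⌋ distinct factors that are abelian squares. In particular, a word of length m can contain Θ(m^2) distinct abelian-square factors. -/
/-- An abelian square: a nonempty word that is the concatenation of two words
with the same Parikh vector. -/
def IsAbelianSquare (w : List Bool) : Prop :=
  w ≠ [] ∧ ∃ u v : List Bool, w = u ++ v ∧ u.length = v.length ∧
    ∀ c, u.count c = v.count c

private lemma repl_inj : ∀ i i' (l l' : List Bool),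
    List.replicate i true ++ false :: l = List.replicate i' true ++ false :: l' →
    i = i' ∧ l = l' := by
  intro i
  induction i with
  | zero =>
    intro i' l l' h
    cases i' <;> simp [List.replicate_succ] at h ⊢ <;> tauto
  | succ k ih =>
    intro i' l l' h
    cases i' with
    | zero => simp [List.replicate_succ] at h
    | succ m =>
      simp only [List.replicate_succ, List.cons_append, List.cons.injEq] at h
      obtain ⟨-, h⟩ := h
      obtain ⟨h1, h2⟩ := ih _ _ _ h
      exact ⟨by omega, h2⟩

private lemma card_filter_parity (N r : ℕ) (hr : r < 2) :
    ((Finset.range N).filter (fun j => j % 2 = r)).card = (N + 1 - r) / 2 := by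
  induction N with
  | zero => simp; omega
  | succ m ih =>
    rw [Finset.range_add_one, Finset.filter_insert]
    by_cases h : m % 2 = r
    · rw [if_pos h, Finset.card_insert_of_notMem (by simp), ih]
      omega
    · rw [if_neg h, ih]
      omega

/-- The word `a^n b a^n b a^n` (with `a = true`, `b = false`) contains at least
`⌊(n+1)^2/2⌋` distinct abelian-square factors. -/
theorem stmt0 (n : ℕ) (hn : 0 < n) :
    (n + 1) ^ 2 / 2 ≤
      {u : List Bool | u <:+: (List.replicate n true ++ [false] ++
        List.replicate n true ++ [false] ++ List.replicate n true) ∧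
        IsAbelianSquare u}.ncard := by
  classical
  set W : List Bool := List.replicate n true ++ [false] ++
      List.replicate n true ++ [false] ++ List.replicate n true with hW
  set S : Set (List Bool) := {u : List Bool | u <:+: W ∧ IsAbelianSquare u} with hS
  set F : ℕ × ℕ → List Bool := fun p =>
    List.replicate p.1 true ++ [false] ++ List.replicate n true ++ [false] ++
      List.replicate p.2 true with hF
  set T : Finset (ℕ × ℕ) :=
    (Finset.range (n+1)).biUnion (fun i =>
      ((Finset.range (n+1)).filter (fun j => (i + j + n) % 2 = 0)).image (fun j => (i, j)))
    with hT
  -- membership characterization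
  have hmemT : ∀ p : ℕ × ℕ, p ∈ T → p.1 ≤ n ∧ p.2 ≤ n ∧ (p.1 + p.2 + n) % 2 = 0 := by
    intro p hp
    simp only [hT, Finset.mem_biUnion, Finset.mem_image, Finset.mem_filter,
      Finset.mem_range] at hp
    obtain ⟨i, hi, j, ⟨hj, hpar⟩, rfl⟩ := hp
    exact ⟨by omega, by omega, hpar⟩
  -- F maps T into S
  have hsub : ∀ p ∈ T, F p ∈ S := by
    intro p hp
    obtain ⟨hi, hj, hpar⟩ := hmemT p hp
    obtain ⟨i, j⟩ := p
    simp only at hi hj hpar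
    constructor
    · -- infix
      refine ⟨List.replicate (n - i) true, List.replicate (n - j) true, ?_⟩
      have h1 : List.replicate n true =
          List.replicate (n - i) true ++ List.replicate i true := by
        rw [← List.replicate_add]; congr 1; omega
      have h2 : List.replicate n true =
          List.replicate j true ++ List.replicate (n - j) true := by
        rw [← List.replicate_add]; congr 1; omega
      conv_rhs => rw [hW]
      nth_rewrite 1 [h1]
      nth_rewrite 2 [h2]
      simp only [hF, List.append_assoc, List.singleton_append, List.cons_append]
    · -- abelian square
      set k : ℕ := (n + j - i) / 2 with hk
      have h2k : 2 * k = n + j - i ∧ i ≤ n + j ∧ k ≤ n := by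
        constructor
        · omega
        · omega
      refine ⟨by simp [hF], List.replicate i true ++ [false] ++ List.replicate k true,
        List.replicate (n - k) true ++ [false] ++ List.replicate j true, ?_, ?_, ?_⟩
      · have hmerge : List.replicate k true ++ List.replicate (n - k) true =
            List.replicate n true := by
          rw [← List.replicate_add]; congr 1; omega
        rw [hF]
        simp only [List.append_assoc]
        rw [← hmerge]
        simp only [List.append_assoc, List.singleton_append]
      · simp only [List.length_append, List.length_replicate, List.length_cons,
          List.length_singleton]
        omega
      · intro c
        cases c <;>
          simp [List.count_append, List.count_replicate, List.count_singleton] <;> omega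
  -- S is finite
  have hfin : S.Finite := by
    apply Set.Finite.subset (W.sublists.toFinset : Finset (List Bool)).finite_toSet
    intro u hu
    simp only [Finset.mem_coe, List.mem_toFinset, List.mem_sublists]
    exact hu.1.sublist
  -- injectivity of F on T
  have hinj : Set.InjOn F T := by
    intro p hp q hq hpq
    obtain ⟨i, j⟩ := p
    obtain ⟨i', j'⟩ := q
    simp only [hF, List.append_assoc, List.singleton_append] at hpq
    obtain ⟨rfl, h2⟩ := repl_inj _ _ _ _ hpq
    have h3 := List.append_cancel_left h2
    simp only [List.cons.injEq, true_and] at h3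
    have : j = j' := by
      have := congrArg List.length h3
      simpa using this
    simp [this]
  -- counting
  have hcount : (n + 1) ^ 2 / 2 ≤ T.card := by
    rw [hT, Finset.card_biUnion]
    · have hcard : ∀ i ∈ Finset.range (n+1),
          (((Finset.range (n+1)).filter (fun j => (i + j + n) % 2 = 0)).image
            (fun j => (i, j))).card = (n + 2 - (i + n) % 2) / 2 := by
        intro i _
        rw [Finset.card_image_of_injective _ (fun a b h => by simpa using h)]
        have : (Finset.range (n+1)).filter (fun j => (i + j + n) % 2 = 0) =
            (Finset.range (n+1)).filter (fun j => j % 2 = (i + n) % 2) := by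
          apply Finset.filter_congr
          intro j _
          constructor <;> omega
        rw [this, card_filter_parity _ _ (by omega)]
      rw [Finset.sum_congr rfl hcard]
      rw [← Finset.sum_filter_add_sum_filter_not (Finset.range (n+1))
        (fun i => (i + n) % 2 = 0)]
      have e1 : ∀ i ∈ (Finset.range (n+1)).filter (fun i => (i + n) % 2 = 0),
          (n + 2 - (i + n) % 2) / 2 = (n + 2) / 2 := by
        intro i hi
        simp only [Finset.mem_filter] at hi
        omega
      have e2 : ∀ i ∈ (Finset.range (n+1)).filter (fun i => ¬(i + n) % 2 = 0),
          (n + 2 - (i + n) % 2) / 2 = (n + 1) / 2 := by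
        intro i hi
        simp only [Finset.mem_filter] at hi
        omega
      rw [Finset.sum_congr rfl e1, Finset.sum_congr rfl e2,
        Finset.sum_const, Finset.sum_const, smul_eq_mul, smul_eq_mul]
      have hcfe : ((Finset.range (n+1)).filter (fun i => (i + n) % 2 = 0)).card =
          (n + 2 - n % 2) / 2 := by
        have : (Finset.range (n+1)).filter (fun i => (i + n) % 2 = 0) =
            (Finset.range (n+1)).filter (fun i => i % 2 = n % 2) := by
          apply Finset.filter_congr
          intro i _
          constructor <;> omega
        rw [this, card_filter_parity _ _ (by omega)]
      have hcfo : ((Finset.range (n+1)).filter (fun i => ¬(i + n) % 2 = 0)).card =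
          (n + 1) - (n + 2 - n % 2) / 2 := by
        have := Finset.card_filter_add_card_filter_not
          (s := Finset.range (n+1)) (p := fun i => (i + n) % 2 = 0)
        rw [Finset.card_range] at this
        omega
      rw [hcfe, hcfo]
      rcases Nat.even_or_odd n with ⟨q, rfl⟩ | ⟨q, rfl⟩
      · have d1 : (q + q + 2 - (q + q) % 2) / 2 = q + 1 := by omega
        have d2 : (q + q + 2) / 2 = q + 1 := by omega
        have d3 : (q + q + 1) / 2 = q := by omega
        rw [d1, d2, d3]
        have : (q + q + 1) ^ 2 = ((q + 1) * (q + 1) + (q + q + 1 - (q + 1)) * q) * 2 - 1 := by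
          have : q + q + 1 - (q + 1) = q := by omega
          rw [this]; ring_nf; omega
        omega
      · have d1 : (2 * q + 1 + 2 - (2 * q + 1) % 2) / 2 = q + 1 := by omega
        have d2 : (2 * q + 1 + 2) / 2 = q + 1 := by omega
        have d3 : (2 * q + 1 + 1) / 2 = q + 1 := by omega
        rw [d1, d2, d3]
        have : (2 * q + 1 + 1) ^ 2 =
            ((q + 1) * (q + 1) + (2 * q + 1 + 1 - (q + 1)) * (q + 1)) * 2 := by
          have : 2 * q + 1 + 1 - (q + 1) = q + 1 := by omega
          rw [this]; ring
        omega
    · -- pairwise disjoint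
      intro i _ i' _ hne
      simp only [Function.onFun, Finset.disjoint_left]
      intro p hp hp'
      simp only [Finset.mem_image, Finset.mem_filter] at hp hp'
      obtain ⟨j, _, rfl⟩ := hp
      obtain ⟨j', _, h⟩ := hp'
      exact hne (congrArg Prod.fst h).symm
  calc (n + 1) ^ 2 / 2 ≤ T.card := hcount
    _ = (T.image F).card := (Finset.card_image_of_injOn hinj).symm
    _ = (↑(T.image F) : Set (List Bool)).ncard := (Set.ncard_coe_finset _).symm
    _ ≤ S.ncard := by
        apply Set.ncard_le_ncard _ hfin
        intro u hu
        simp only [Finset.coe_image, Set.mem_image, Finset.mem_coe] at hu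
        obtain ⟨p, hp, rfl⟩ := hu
        exact hsub p hp
end

section
/- Let w be a finite balanced word over the binary alphabet {a,b} and let k be a positive integer. Then the Parikh vector of w is componentwise divisible by k (i.e., both |w|_a and |w|_b are divisible by k) if and only if w is an abelian k-power (i.e., w = v_1 v_2 ⋯ v_k where all the v_i have the same Parikh vector). -/
/-! Cut `w` into `k` consecutive blocks of length `|w| / k`. By balance the `a`-counts of the
blocks differ pairwise by at most one, and they average to the integer `|w|_a / k`, so they all
equal it. Conversely the Parikh vector of an abelian `k`-power is `k` times that of a block. -/

/-- A finite binary word is balanced if any two factors of the same length have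
numbers of occurrences of `true` differing by at most 1. -/
def BalancedWord (w : List Bool) : Prop :=
  ∀ u v : List Bool, u <:+: w → v <:+: w → u.length = v.length →
    (u.count true : ℤ) - (v.count true : ℤ) ≤ 1

/-- `w` is an abelian `k`-power: `w = v₁v₂⋯v_k` where all the `vᵢ` have the
same Parikh vector. -/
def IsAbelianKPower (w : List Bool) (k : ℕ) : Prop :=
  ∃ l : List (List Bool), l.length = k ∧ w = l.flatten ∧
    ∀ u ∈ l, ∀ v ∈ l, ∀ c, u.count c = v.count c

namespace List

theorem forall_eq_of_sum_map_eq_length_mul {ι : Type*} {l : List ι} {f : ι → ℕ} {t : ℕ}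
    (hsum : (l.map f).sum = l.length * t) (hf : ∀ i ∈ l, ∀ j ∈ l, f i ≤ f j + 1) :
    ∀ i ∈ l, f i = t := by
  have hconst : (l.map fun _ => t).sum = l.length * t := by simp
  intro i hi
  by_contra hne
  rcases Nat.lt_or_gt_of_ne hne with hlt | hgt
  · have := sum_lt_sum f (fun _ => t) (fun j hj => by have := hf j hj i hi; omega) ⟨i, hi, hlt⟩
    omega
  · have := sum_lt_sum (fun _ => t) f (fun j hj => by have := hf i hi j hj; omega) ⟨i, hi, hgt⟩
    omega

theorem exists_flatten_eq_of_length_eq_mul {α : Type*} {w : List α} {k m : ℕ}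
    (h : w.length = k * m) :
    ∃ l : List (List α), l.length = k ∧ (∀ u ∈ l, u.length = m) ∧ l.flatten = w := by
  have hsum : (replicate k m).sum = w.length := by simp [h]
  refine ⟨(replicate k m).splitLengths w, by simp, fun u hu => ?_, flatten_splitLengths _ _ hsum.ge⟩
  have : u.length ∈ replicate k m := by
    rw [← map_splitLengths_length w _ hsum.le]
    exact mem_map_of_mem hu
  exact eq_of_mem_replicate this

end List

theorem BalancedWord.count_true_eq_of_flatten_eq {w : List Bool} (hbal : BalancedWord w)
    {l : List (List Bool)} (hl : l.flatten = w) {m : ℕ} (hlen : ∀ u ∈ l, u.length = m) {t : ℕ}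
    (ht : w.count true = l.length * t) : ∀ u ∈ l, u.count true = t := by
  have hinfix : ∀ u ∈ l, u <:+: w := fun u hu => hl ▸ List.infix_of_mem_flatten hu
  refine List.forall_eq_of_sum_map_eq_length_mul (by rwa [← List.count_flatten, hl]) ?_
  intro u hu v hv
  have := hbal u v (hinfix u hu) (hinfix v hv) (by rw [hlen u hu, hlen v hv])
  omega

theorem BalancedWord.isAbelianKPower {w : List Bool} (hbal : BalancedWord w) {k : ℕ}
    (htrue : k ∣ w.count true) (hfalse : k ∣ w.count false) : IsAbelianKPower w k := by
  obtain ⟨t, ht⟩ := htrue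
  obtain ⟨s, hs⟩ := hfalse
  have hw : w.length = k * (t + s) := by
    rw [← List.count_true_add_count_false, ht, hs, mul_add]
  obtain ⟨l, hk, hlen, hl⟩ := List.exists_flatten_eq_of_length_eq_mul hw
  have htrue := hbal.count_true_eq_of_flatten_eq hl hlen (t := t) (by rw [ht, hk])
  refine ⟨l, hk, hl.symm, fun u hu v hv c => ?_⟩
  cases c
  · have hu' := List.count_true_add_count_false u
    have hv' := List.count_true_add_count_false v
    rw [hlen u hu, htrue u hu] at hu'
    rw [hlen v hv, htrue v hv] at hv'
    omega
  · rw [htrue u hu, htrue v hv]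

theorem IsAbelianKPower.dvd_count {w : List Bool} {k : ℕ} (h : IsAbelianKPower w k) (c : Bool) :
    k ∣ w.count c := by
  obtain ⟨l, rfl, rfl, hl⟩ := h
  rcases l with _ | ⟨v, l⟩
  · simp
  · have hconst : ∀ n ∈ (v :: l).map (List.count c), n = v.count c := by
      simp only [List.mem_map]
      rintro _ ⟨u, hu, rfl⟩
      exact hl u hu v List.mem_cons_self c
    rw [List.count_flatten, List.sum_eq_card_nsmul _ _ hconst, List.length_map, smul_eq_mul]
    exact dvd_mul_right _ _

theorem stmt3_general (w : List Bool) (hbal : BalancedWord w) (k : ℕ) :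
    (k ∣ w.count true ∧ k ∣ w.count false) ↔ IsAbelianKPower w k :=
  ⟨fun h => hbal.isAbelianKPower h.1 h.2, fun h => ⟨h.dvd_count true, h.dvd_count false⟩⟩

/-- For a nonempty balanced binary word `w` and `k > 0`: the Parikh vector of
`w` is componentwise divisible by `k` iff `w` is an abelian `k`-power. -/
theorem stmt3 (w : List Bool) (hw : w ≠ []) (hbal : BalancedWord w) (k : ℕ)
    (hk : 0 < k) :
    (k ∣ w.count true ∧ k ∣ w.count false) ↔ IsAbelianKPower w k :=
  stmt3_general w hbal k
end

section
/- For the Thue-Morse word t, let f_{aa}(n) be the number of factors of t of length n that begin and end with the same letter, and p(n) the number of factors of t of length n. Then for every n ≥ 2, f_{aa}(n) ≥ p(n)/3 and likewise the number f_{ab}(n) of factors of length n beginning and ending with different letters satisfies f_{ab}(n) ≥ p(n)/3. -/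
/-- The Thue-Morse word: `tm n` is the parity of the number of `1`'s in the
binary expansion of `n`. -/
def tm (n : ℕ) : Bool := (Nat.digits 2 n).sum % 2 == 1

/-- `u` is a factor of the infinite word `s`. -/
def FactorOf {A : Type*} (u : List A) (s : ℕ → A) : Prop :=
  ∃ i : ℕ, u = (List.range u.length).map fun k => s (i + k)

/-! Writing `μ` for the morphism `a ↦ a (!a)`, a factor of `t` of length `n` occurring at
position `2j + r` (`r ≤ 1`) is `μ(w)` with `r` letters cut at the start and at most one at the
end, where `w` is the factor of length `N = ⌈(n + r)/2⌉` at position `j`. Hence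
`p(n) ≤ p(⌈n/2⌉) + p(⌈(n+1)/2⌉)`. Moreover this cut is injective, it keeps the class
"same first and last letter" for odd `n` and swaps it for even `n`, and for `n ≥ 4` the two cuts
have disjoint images, because a factor occurring at both parities would contain a cube `aaa`.
So `f_c(n) ≥ f_{c'}(⌈n/2⌉) + f_{c'}(⌈(n+1)/2⌉)` for the matching class `c'`, and `p ≤ 3 f_c`
propagates by strong induction from `n = 2, 3`. -/

namespace Set

variable {α β : Type*}

theorem ncard_le_ncard_add_ncard_of_subset_image_union {s : Set β} {t₁ t₂ : Set α}
    {f₁ f₂ : α → β} (h : s ⊆ f₁ '' t₁ ∪ f₂ '' t₂) (ht₁ : t₁.Finite) (ht₂ : t₂.Finite) :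
    s.ncard ≤ t₁.ncard + t₂.ncard :=
  calc s.ncard ≤ (f₁ '' t₁ ∪ f₂ '' t₂).ncard :=
        ncard_le_ncard h ((ht₁.image _).union (ht₂.image _))
    _ ≤ (f₁ '' t₁).ncard + (f₂ '' t₂).ncard := ncard_union_le _ _
    _ ≤ t₁.ncard + t₂.ncard := add_le_add (ncard_image_le ht₁) (ncard_image_le ht₂)

theorem ncard_add_ncard_le_of_injOn {s₁ s₂ : Set α} {t : Set β} {f₁ f₂ : α → β}
    (hf₁ : MapsTo f₁ s₁ t) (hf₂ : MapsTo f₂ s₂ t) (hi₁ : InjOn f₁ s₁) (hi₂ : InjOn f₂ s₂)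
    (hd : Disjoint (f₁ '' s₁) (f₂ '' s₂)) (ht : t.Finite) :
    s₁.ncard + s₂.ncard ≤ t.ncard := by
  rw [← hi₁.ncard_image, ← hi₂.ncard_image,
    ← ncard_union_eq hd (ht.subset hf₁.image_subset) (ht.subset hf₂.image_subset)]
  exact ncard_le_ncard (union_subset hf₁.image_subset hf₂.image_subset) ht

end Set

namespace ThueMorse

theorem tm_two_mul (k : ℕ) : tm (2 * k) = tm k := by
  rcases Nat.eq_zero_or_pos k with rfl | hk
  · rfl
  · rw [tm, Nat.digits_def' one_lt_two (by omega), Nat.mul_mod_right,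
      Nat.mul_div_cancel_left k two_pos, List.sum_cons, zero_add, tm]

theorem tm_two_mul_add_one (k : ℕ) : tm (2 * k + 1) = !tm k := by
  rw [tm, Nat.digits_def' one_lt_two (by omega), Nat.mul_add_mod_self_left,
    Nat.mul_add_div two_pos, List.sum_cons, tm]
  rcases Nat.mod_two_eq_zero_or_one (Nat.digits 2 k).sum with h | h <;>
    simp [Nat.add_mod, h]

theorem tm_two_mul_add (k : ℕ) {s : ℕ} (hs : s ≤ 1) :
    tm (2 * k + s) = (tm k ^^ decide (s = 1)) := by
  interval_cases s
  · simp [tm_two_mul]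
  · simp [tm_two_mul_add_one]

theorem tm_two_mul_add_one_ne (k : ℕ) : tm (2 * k + 1) ≠ tm (2 * k) := by
  simp [tm_two_mul_add_one, tm_two_mul]

theorem not_tm_eq_and_tm_eq (m : ℕ) : ¬ (tm m = tm (m + 1) ∧ tm (m + 1) = tm (m + 2)) := by
  rintro ⟨h₁, h₂⟩
  obtain ⟨k, rfl | rfl⟩ := Nat.even_or_odd' m
  · exact tm_two_mul_add_one_ne k h₁.symm
  · rw [show 2 * k + 1 + 1 = 2 * (k + 1) by ring, show 2 * k + 1 + 2 = 2 * (k + 1) + 1 by ring]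
      at h₂
    exact tm_two_mul_add_one_ne (k + 1) h₂.symm

def factorAt (i n : ℕ) : List Bool := (List.range n).map fun k => tm (i + k)

@[simp] theorem length_factorAt (i n : ℕ) : (factorAt i n).length = n := by simp [factorAt]

@[simp] theorem getElem_factorAt {i n k : ℕ} (hk : k < (factorAt i n).length) :
    (factorAt i n)[k] = tm (i + k) := by simp [factorAt]

theorem factorAt_succ (i n : ℕ) : factorAt i (n + 1) = tm i :: factorAt (i + 1) n := by
  simp [factorAt, List.range_succ_eq_map, Nat.add_right_comm, Nat.add_assoc]

theorem factorAt_eq_factorAt_iff {i i' n : ℕ} :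
    factorAt i n = factorAt i' n ↔ ∀ k < n, tm (i + k) = tm (i' + k) := by
  simp [factorAt, List.map_inj_left]

def morphism (w : List Bool) : List Bool := w.flatMap fun a => [a, !a]

theorem morphism_factorAt (j N : ℕ) : morphism (factorAt j N) = factorAt (2 * j) (2 * N) := by
  induction N generalizing j with
  | zero => rfl
  | succ N ih =>
    rw [show 2 * (N + 1) = 2 * N + 1 + 1 by ring, factorAt_succ, factorAt_succ, factorAt_succ,
      tm_two_mul_add_one, tm_two_mul, show 2 * j + 1 + 1 = 2 * (j + 1) by ring, ← ih]
    rfl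

def morphismSlice (r n : ℕ) (w : List Bool) : List Bool := ((morphism w).drop r).take n

theorem morphismSlice_factorAt {r n N : ℕ} (h : n + r ≤ 2 * N) (j : ℕ) :
    morphismSlice r n (factorAt j N) = factorAt (2 * j + r) n := by
  apply List.ext_getElem
  · simp [morphismSlice, morphism_factorAt]; omega
  · intro k _ _
    simp [morphismSlice, morphism_factorAt, Nat.add_assoc]

theorem factorAt_eq_of_factorAt_two_mul_add_eq {r n N j j' : ℕ} (hr : r ≤ 1) (hn : 0 < n)
    (hN : 2 * N ≤ n + r + 1) (h : factorAt (2 * j + r) n = factorAt (2 * j' + r) n) :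
    factorAt j N = factorAt j' N := by
  rw [factorAt_eq_factorAt_iff] at h ⊢
  intro k hk
  -- some letter `tm (2 (j + k) + s)` of the block `μ (tm (j + k))` lies in the slice, at offset `o`
  obtain ⟨s, o, hs, ho, hso⟩ : ∃ s o, s ≤ 1 ∧ o < n ∧ r + o = 2 * k + s := by
    rcases Nat.eq_zero_or_pos k with rfl | hk₀
    · exact ⟨r, 0, hr, hn, by omega⟩
    · exact ⟨0, 2 * k - r, zero_le_one, by omega, by omega⟩
  have := h o ho
  rwa [show 2 * j + r + o = 2 * (j + k) + s by omega,
    show 2 * j' + r + o = 2 * (j' + k) + s by omega, tm_two_mul_add _ hs, tm_two_mul_add _ hs,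
    Bool.xor_left_inj] at this

theorem factorAt_two_mul_ne_factorAt_two_mul_add_one {n : ℕ} (hn : 4 ≤ n) (j j' : ℕ) :
    factorAt (2 * j) n ≠ factorAt (2 * j' + 1) n := by
  intro h
  rw [factorAt_eq_factorAt_iff] at h
  have h₀ : tm (2 * j) = tm (2 * j' + 1) := h 0 (by omega)
  have h₁ : tm (2 * j + 1) = tm (2 * (j' + 1)) := h 1 (by omega)
  have h₂ : tm (2 * (j + 1)) = tm (2 * (j' + 1) + 1) := h 2 (by omega)
  have h₃ : tm (2 * (j + 1) + 1) = tm (2 * (j' + 2)) := h 3 (by omega)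
  simp only [tm_two_mul, tm_two_mul_add_one] at h₀ h₁ h₂ h₃
  refine not_tm_eq_and_tm_eq j' ⟨?_, ?_⟩
  · rw [← h₁, h₀, Bool.not_not]
  · rw [← h₃, h₂, Bool.not_not]

def endsAgree (u : List Bool) : Bool := u.head? == u.getLast?

theorem endsAgree_factorAt {n : ℕ} (hn : 0 < n) (i : ℕ) :
    endsAgree (factorAt i n) = (tm i == tm (i + (n - 1))) := by
  simp [endsAgree, factorAt, List.head?_range, List.getLast?_range, hn.ne']

theorem endsAgree_factorAt_two_mul_add {r n N : ℕ} (hr : r ≤ 1) (hn : 0 < n)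
    (hN : 2 * N ≤ n + r + 1) (hN' : n + r ≤ 2 * N) (j : ℕ) :
    endsAgree (factorAt (2 * j + r) n) = (endsAgree (factorAt j N) ^^ decide (Even n)) := by
  obtain ⟨s, hs, hsN⟩ : ∃ s, s ≤ 1 ∧ 2 * j + r + (n - 1) = 2 * (j + (N - 1)) + s :=
    ⟨n + r + 1 - 2 * N, by omega, by omega⟩
  rw [endsAgree_factorAt hn, endsAgree_factorAt (by omega), hsN, tm_two_mul_add _ hr,
    tm_two_mul_add _ hs]
  have hpar : Even n ↔ (r = 1 ↔ s ≠ 1) := by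
    rw [Nat.even_iff]; omega
  cases tm j <;> cases tm (j + (N - 1)) <;> by_cases r = 1 <;> by_cases s = 1 <;> simp_all

def factors (n : ℕ) : Set (List Bool) := {u | FactorOf u tm ∧ u.length = n}

def endFactors (n : ℕ) (c : Bool) : Set (List Bool) := {u ∈ factors n | endsAgree u = c}

theorem factors_eq_range (n : ℕ) : factors n = Set.range fun i => factorAt i n := by
  ext u
  constructor
  · rintro ⟨⟨i, hi⟩, rfl⟩
    exact ⟨i, hi.symm⟩
  · rintro ⟨i, rfl⟩
    exact ⟨⟨i, by rw [length_factorAt]; rfl⟩, length_factorAt i n⟩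

theorem factors_finite (n : ℕ) : (factors n).Finite :=
  (List.finite_length_eq Bool n).subset fun _ hu => hu.2

theorem endFactors_finite (n : ℕ) (c : Bool) : (endFactors n c).Finite :=
  (factors_finite n).subset fun _ hu => hu.1

theorem factorAt_mem_endFactors_iff {n : ℕ} (hn : 0 < n) (i : ℕ) (c : Bool) :
    factorAt i n ∈ endFactors n c ↔ (tm i == tm (i + (n - 1))) = c := by
  simp [endFactors, factors_eq_range, endsAgree_factorAt hn]

theorem ncard_factors_le (n : ℕ) :
    (factors n).ncard ≤ (factors ((n + 1) / 2)).ncard + (factors ((n + 2) / 2)).ncard := by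
  refine Set.ncard_le_ncard_add_ncard_of_subset_image_union (f₁ := morphismSlice 0 n)
    (f₂ := morphismSlice 1 n) ?_ (factors_finite _) (factors_finite _)
  simp only [factors_eq_range]
  rintro _ ⟨i, rfl⟩
  obtain ⟨j, rfl | rfl⟩ := Nat.even_or_odd' i
  · exact .inl ⟨_, ⟨j, rfl⟩, morphismSlice_factorAt (by omega) j⟩
  · exact .inr ⟨_, ⟨j, rfl⟩, morphismSlice_factorAt (by omega) j⟩

theorem mapsTo_morphismSlice_endFactors {r n N : ℕ} (hr : r ≤ 1) (hn : 0 < n)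
    (hN : 2 * N ≤ n + r + 1) (hN' : n + r ≤ 2 * N) (c : Bool) :
    Set.MapsTo (morphismSlice r n) (endFactors N c) (endFactors n (c ^^ decide (Even n))) := by
  rintro _ ⟨hu, rfl⟩
  rw [factors_eq_range] at hu
  obtain ⟨j, rfl⟩ := hu
  refine ⟨by rw [factors_eq_range]; exact ⟨2 * j + r, (morphismSlice_factorAt hN' j).symm⟩, ?_⟩
  rw [morphismSlice_factorAt hN', endsAgree_factorAt_two_mul_add hr hn hN hN']

theorem injOn_morphismSlice {r n N : ℕ} (hr : r ≤ 1) (hn : 0 < n)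
    (hN : 2 * N ≤ n + r + 1) (hN' : n + r ≤ 2 * N) :
    Set.InjOn (morphismSlice r n) (factors N) := by
  rw [factors_eq_range]
  rintro _ ⟨j, rfl⟩ _ ⟨j', rfl⟩ h
  rw [morphismSlice_factorAt hN', morphismSlice_factorAt hN'] at h
  exact factorAt_eq_of_factorAt_two_mul_add_eq hr hn hN h

theorem ncard_endFactors_add_le {n : ℕ} (hn : 4 ≤ n) (c : Bool) :
    (endFactors ((n + 1) / 2) c).ncard + (endFactors ((n + 2) / 2) c).ncard ≤
      (endFactors n (c ^^ decide (Even n))).ncard := by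
  refine Set.ncard_add_ncard_le_of_injOn
    (mapsTo_morphismSlice_endFactors (r := 0) (by norm_num) (by omega) (by omega) (by omega) c)
    (mapsTo_morphismSlice_endFactors (r := 1) le_rfl (by omega) (by omega) (by omega) c)
    ((injOn_morphismSlice (r := 0) (by norm_num) (by omega) (by omega) (by omega)).mono
      fun _ hu => hu.1)
    ((injOn_morphismSlice (r := 1) le_rfl (by omega) (by omega) (by omega)).mono
      fun _ hu => hu.1)
    ?_ (endFactors_finite _ _)
  rw [Set.disjoint_left]
  rintro _ ⟨_, ⟨hu, -⟩, rfl⟩ ⟨_, ⟨hv, -⟩, h⟩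
  rw [factors_eq_range] at hu hv
  obtain ⟨j, rfl⟩ := hu
  obtain ⟨j', rfl⟩ := hv
  rw [morphismSlice_factorAt (by omega), morphismSlice_factorAt (by omega)] at h
  exact factorAt_two_mul_ne_factorAt_two_mul_add_one hn j j' h.symm

theorem ncard_factors_two_le : (factors 2).ncard ≤ 4 := by
  let F : Finset (List Bool) := {[false, false], [false, true], [true, false], [true, true]}
  have hF : ∀ a b : Bool, [a, b] ∈ F := by decide
  calc (factors 2).ncard ≤ (F : Set (List Bool)).ncard := by
        refine Set.ncard_le_ncard ?_ F.finite_toSet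
        rw [factors_eq_range]
        rintro _ ⟨i, rfl⟩
        exact hF _ _
    _ = 4 := by rw [Set.ncard_coe_finset]; rfl

theorem ncard_factors_three_le : (factors 3).ncard ≤ 6 := by
  let F : Finset (List Bool) := {[false, false, true], [false, true, false], [false, true, true],
    [true, false, false], [true, false, true], [true, true, false]}
  have hF : ∀ a b c : Bool, ¬ (a = b ∧ b = c) → [a, b, c] ∈ F := by decide
  calc (factors 3).ncard ≤ (F : Set (List Bool)).ncard := by
        refine Set.ncard_le_ncard ?_ F.finite_toSet
        rw [factors_eq_range]
        rintro _ ⟨i, rfl⟩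
        exact hF _ _ _ (not_tm_eq_and_tm_eq i)
    _ = 6 := by rw [Set.ncard_coe_finset]; rfl

theorem two_le_ncard_endFactors {n : ℕ} (hn₂ : 2 ≤ n) (hn₃ : n ≤ 3) (c : Bool) :
    2 ≤ (endFactors n c).ncard := by
  suffices ∃ i i', tm i ≠ tm i' ∧ (tm i == tm (i + (n - 1))) = c ∧
      (tm i' == tm (i' + (n - 1))) = c by
    obtain ⟨i, i', hne, hi, hi'⟩ := this
    exact (Set.one_lt_ncard_iff (endFactors_finite n c)).2 ⟨factorAt i n, factorAt i' n,
      (factorAt_mem_endFactors_iff (by omega) i c).2 hi,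
      (factorAt_mem_endFactors_iff (by omega) i' c).2 hi',
      fun h => hne (factorAt_eq_factorAt_iff.1 h 0 (by omega))⟩
  -- in `t = 0110100…`: `01, 10`; `00, 11`; `011, 110`; `010, 101`
  interval_cases n <;> cases c
  · exact ⟨0, 2, by decide⟩
  · exact ⟨5, 1, by decide⟩
  · exact ⟨0, 1, by decide⟩
  · exact ⟨3, 2, by decide⟩

theorem ncard_factors_le_three_mul_ncard_endFactors {n : ℕ} (hn : 2 ≤ n) (c : Bool) :
    (factors n).ncard ≤ 3 * (endFactors n c).ncard := by
  induction n using Nat.strong_induction_on generalizing c with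
  | _ n ih =>
  rcases (show n = 2 ∨ n = 3 ∨ 4 ≤ n by omega) with rfl | rfl | hn₄
  · have := two_le_ncard_endFactors le_rfl (by norm_num) c
    have := ncard_factors_two_le
    omega
  · have := two_le_ncard_endFactors (by norm_num) le_rfl c
    have := ncard_factors_three_le
    omega
  · set c' := c ^^ decide (Even n)
    have hsplit := ncard_factors_le n
    have hmerge := ncard_endFactors_add_le hn₄ c'
    rw [show (c' ^^ decide (Even n)) = c by simp [c']] at hmerge
    have h₁ := ih ((n + 1) / 2) (by omega) (by omega) c'
    have h₂ := ih ((n + 2) / 2) (by omega) (by omega) c'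
    omega

end ThueMorse

/-- For every `n ≥ 2`, at least one-third of the length-`n` factors of the
Thue-Morse word begin and end with the same letter, and at least one-third
begin and end with different letters. -/
theorem stmt8 (n : ℕ) (hn : 2 ≤ n) :
    {u : List Bool | FactorOf u tm ∧ u.length = n}.ncard ≤
      3 * {u : List Bool | FactorOf u tm ∧ u.length = n ∧
            u.head? = u.getLast?}.ncard ∧
    {u : List Bool | FactorOf u tm ∧ u.length = n}.ncard ≤
      3 * {u : List Bool | FactorOf u tm ∧ u.length = n ∧
            u.head? ≠ u.getLast?}.ncard := by
  have hsame : {u : List Bool | FactorOf u tm ∧ u.length = n ∧ u.head? = u.getLast?} =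
      ThueMorse.endFactors n true := by
    ext u; simp [ThueMorse.endFactors, ThueMorse.factors, ThueMorse.endsAgree, and_assoc]
  have hdiff : {u : List Bool | FactorOf u tm ∧ u.length = n ∧ u.head? ≠ u.getLast?} =
      ThueMorse.endFactors n false := by
    ext u; simp [ThueMorse.endFactors, ThueMorse.factors, ThueMorse.endsAgree, and_assoc]
  rw [hsame, hdiff]
  exact ⟨ThueMorse.ncard_factors_le_three_mul_ncard_endFactors hn true,
    ThueMorse.ncard_factors_le_three_mul_ncard_endFactors hn false⟩
end

section
/- If an irrational number α has bounded partial quotients in its continued fraction expansion, then so does α/2. -/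
/-!
For irrational `v` with convergents `pₙ / qₙ` and partial quotients `aₙ`, the exact error formula
`v - pₙ / qₙ = (-1)ⁿ / (qₙ (ξₙ₊₁ qₙ + qₙ₋₁))`, where the complete quotient `ξₙ₊₁` has integer
part `aₙ₊₁`, gives `1 / ((aₙ₊₁ + 2) qₙ²) ≤ |v - pₙ / qₙ| ≤ 1 / (aₙ₊₁ qₙ²)`. Hence bounded partial
quotients are equivalent to `v` being badly approximable, `|v - p / q| ≥ c / q²` for all
fractions: choosing `qₙ ≤ 2q < qₙ₊₁`, a fraction `p / q ≠ pₙ / qₙ` satisfies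
`|v - p / q| ≥ 1 / (q qₙ) - 1 / (qₙ qₙ₊₁) ≥ 1 / (4 q²)`. Being badly approximable is preserved
by `v ↦ v / 2`, since `|v / 2 - p / q| = |v - 2p / q| / 2`.
-/

/-- The partial quotients of the simple continued fraction expansion of `α`:
`a 0 = ⌊α⌋` and the subsequent ones are obtained by iterating the Gauss map. -/
noncomputable def cfrac (α : ℝ) : ℕ → ℤ
  | 0 => ⌊α⌋
  | n + 1 => cfrac (Int.fract α)⁻¹ n

/-- `α` has bounded partial quotients. -/
def BddPartialQuotients (α : ℝ) : Prop := ∃ B : ℤ, ∀ i : ℕ, cfrac α i ≤ B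

open GenContFract
open GenContFract (of)

/-- Integer continuants `contNum`, `contDen`, indexed like `GenContFract.contsAux`: the `n`-th
convergent of `v` is `contNum v (n + 1) / contDen v (n + 1)`. -/
noncomputable def contNum (v : ℝ) : ℕ → ℤ
  | 0 => 1
  | 1 => ⌊v⌋
  | n + 2 => cfrac v (n + 1) * contNum v (n + 1) + contNum v n

noncomputable def contDen (v : ℝ) : ℕ → ℤ
  | 0 => 0
  | 1 => 1
  | n + 2 => cfrac v (n + 1) * contDen v (n + 1) + contDen v n

namespace Irrational

variable {v : ℝ}

lemma fract (hv : Irrational v) : Irrational (Int.fract v) :=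
  hv.sub_intCast _

lemma exists_intFractPair_stream_eq (hv : Irrational v) (n : ℕ) :
    ∃ w : ℝ, Irrational w ∧ IntFractPair.stream v n = some (IntFractPair.of w) ∧
      ∀ k, cfrac v (n + k) = cfrac w k := by
  induction n generalizing v with
  | zero => exact ⟨v, hv, IntFractPair.stream_zero v, by simp⟩
  | succ n ih =>
    obtain ⟨w, hw, hstream, hcfrac⟩ := ih hv.fract.inv
    refine ⟨w, hw, by rwa [IntFractPair.stream_succ hv.fract.ne_zero], fun k => ?_⟩
    rw [show n + 1 + k = n + k + 1 by omega, ← hcfrac]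
    rfl

lemma one_le_cfrac_succ (hv : Irrational v) (n : ℕ) : 1 ≤ cfrac v (n + 1) := by
  obtain ⟨w, -, hstream, hcfrac⟩ := hv.exists_intFractPair_stream_eq (n + 1)
  show 1 ≤ cfrac v (n + 1 + 0)
  rw [hcfrac]
  exact IntFractPair.one_le_succ_nth_stream_b hstream

lemma of_s_get?_eq (hv : Irrational v) (n : ℕ) :
    (of v).s.get? n = some ⟨1, (cfrac v (n + 1) : ℝ)⟩ := by
  obtain ⟨w, -, hstream, hcfrac⟩ := hv.exists_intFractPair_stream_eq (n + 1)
  rw [get?_of_eq_some_of_succ_get?_intFractPair_stream hstream]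
  exact congrArg (fun b : ℤ => some (Pair.mk 1 (b : ℝ))) (hcfrac 0).symm

lemma of_not_terminatedAt (hv : Irrational v) (n : ℕ) : ¬(of v).TerminatedAt n := by
  simp [terminatedAt_iff_s_none, hv.of_s_get?_eq n]

lemma one_le_contDen_succ (hv : Irrational v) : ∀ n, 1 ≤ contDen v (n + 1)
  | 0 => le_rfl
  | 1 => by simpa [contDen] using hv.one_le_cfrac_succ 0
  | n + 2 => by
    have := hv.one_le_cfrac_succ (n + 1)
    have := hv.one_le_contDen_succ n
    have := hv.one_le_contDen_succ (n + 1)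
    show 1 ≤ cfrac v (n + 2) * contDen v (n + 2) + contDen v (n + 1)
    nlinarith

lemma contDen_nonneg (hv : Irrational v) : ∀ n, 0 ≤ contDen v n
  | 0 => le_rfl
  | n + 1 => zero_le_one.trans (hv.one_le_contDen_succ n)

lemma contDen_add_le (hv : Irrational v) (n : ℕ) :
    contDen v n + contDen v (n + 1) ≤ contDen v (n + 2) := by
  have := hv.one_le_cfrac_succ n
  have := hv.contDen_nonneg (n + 1)
  show _ ≤ cfrac v (n + 1) * contDen v (n + 1) + contDen v n
  nlinarith

lemma contDen_le_succ (hv : Irrational v) : ∀ n, contDen v n ≤ contDen v (n + 1)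
  | 0 => zero_le_one
  | n + 1 => by linarith [hv.contDen_add_le n, hv.contDen_nonneg n]

lemma le_contDen_succ (hv : Irrational v) : ∀ n : ℕ, (n : ℤ) ≤ contDen v (n + 1)
  | 0 => zero_le_one
  | 1 => by simpa using hv.one_le_contDen_succ 1
  | n + 2 => by
    have := hv.contDen_add_le (n + 1)
    have := hv.le_contDen_succ (n + 1)
    have := hv.one_le_contDen_succ n
    push_cast at *
    linarith

lemma exists_contDen_le_lt (hv : Irrational v) {M : ℤ} (hM : 1 ≤ M) :
    ∃ n, contDen v (n + 1) ≤ M ∧ M < contDen v (n + 2) := by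
  have hex : ∃ n, M < contDen v (n + 1) :=
    ⟨M.toNat + 1, by have := hv.le_contDen_succ (M.toNat + 1); push_cast at this; omega⟩
  obtain ⟨m, hm⟩ : ∃ m, Nat.find hex = m + 1 :=
    Nat.exists_eq_succ_of_ne_zero fun h0 => by
      have := Nat.find_spec hex
      simp only [h0, contDen] at this
      omega
  refine ⟨m, not_lt.1 (Nat.find_min hex (by omega)), ?_⟩
  have := Nat.find_spec hex
  rwa [hm] at this

lemma of_contsAux_eq (hv : Irrational v) :
    ∀ n, (of v).contsAux n = ⟨(contNum v n : ℝ), (contDen v n : ℝ)⟩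
  | 0 => by simp [contNum, contDen, zeroth_contAux_eq_one_zero]
  | 1 => by simp [contNum, contDen, first_contAux_eq_h_one, of_h_eq_floor]
  | n + 2 => by
    rw [contsAux_recurrence (hv.of_s_get?_eq n) (hv.of_contsAux_eq n) (hv.of_contsAux_eq (n + 1))]
    simp only [contNum, contDen]
    push_cast
    congr 1 <;> ring

lemma of_convs_eq (hv : Irrational v) (n : ℕ) :
    (of v).convs n = (contNum v (n + 1) : ℝ) / contDen v (n + 1) := by
  rw [conv_eq_conts_a_div_conts_b, nth_cont_eq_succ_nth_contAux, hv.of_contsAux_eq]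

lemma of_dens_eq (hv : Irrational v) (n : ℕ) : (of v).dens n = contDen v (n + 1) := by
  rw [den_eq_conts_b, nth_cont_eq_succ_nth_contAux, hv.of_contsAux_eq]

lemma abs_sub_convergent_le (hv : Irrational v) (n : ℕ) :
    |v - contNum v (n + 1) / contDen v (n + 1)|
      ≤ 1 / ((contDen v (n + 1) : ℝ) * contDen v (n + 2)) := by
  simpa only [hv.of_convs_eq, hv.of_dens_eq] using abs_sub_convs_le (hv.of_not_terminatedAt n)

lemma abs_sub_convergent_le' (hv : Irrational v) (n : ℕ) :
    |v - contNum v (n + 1) / contDen v (n + 1)|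
      ≤ 1 / ((cfrac v (n + 1) : ℝ) * contDen v (n + 1) * contDen v (n + 1)) := by
  simpa only [hv.of_convs_eq, hv.of_dens_eq] using
    abs_sub_convergents_le' (partDen_eq_s_b (hv.of_s_get?_eq n))

lemma one_div_le_abs_sub_convergent (hv : Irrational v) (n : ℕ) :
    1 / (((cfrac v (n + 1) : ℝ) + 2) * contDen v (n + 1) * contDen v (n + 1))
      ≤ |v - contNum v (n + 1) / contDen v (n + 1)| := by
  obtain ⟨w, hw, hstream, hcfrac⟩ := hv.exists_intFractPair_stream_eq n
  have hexact := sub_convs_eq hstream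
  have hfr : (IntFractPair.of w).fr = Int.fract w := rfl
  simp only [hfr, hw.fract.ne_zero, if_false, hv.of_convs_eq, hv.of_contsAux_eq] at hexact
  -- `(fract w)⁻¹` is the complete quotient whose integer part is `cfrac v (n + 1)`
  have hquot : (Int.fract w)⁻¹ < cfrac v (n + 1) + 1 := by
    rw [hcfrac 1]
    exact Int.lt_floor_add_one _
  have hD : (1 : ℝ) ≤ contDen v (n + 1) := mod_cast hv.one_le_contDen_succ n
  have hD' : (contDen v n : ℝ) ≤ contDen v (n + 1) := mod_cast hv.contDen_le_succ n
  have hD0 : (0 : ℝ) ≤ contDen v n := mod_cast hv.contDen_nonneg n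
  have hquot0 : 0 < (Int.fract w)⁻¹ :=
    inv_pos.2 (hw.fract.ne_zero.symm.lt_of_le (Int.fract_nonneg w))
  rw [hexact, abs_div, abs_neg_one_pow, abs_of_pos (by positivity)]
  apply one_div_le_one_div_of_le (by positivity)
  calc (contDen v (n + 1) : ℝ) * ((Int.fract w)⁻¹ * contDen v (n + 1) + contDen v n)
      ≤ contDen v (n + 1) * ((cfrac v (n + 1) + 1) * contDen v (n + 1) + contDen v (n + 1)) := by
        gcongr
    _ = ((cfrac v (n + 1) : ℝ) + 2) * contDen v (n + 1) * contDen v (n + 1) := by ring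

end Irrational

def BadlyApproximable (x : ℝ) : Prop :=
  ∃ c > 0, ∀ p q : ℤ, 0 < q → c / (q : ℝ) ^ 2 ≤ |x - p / q|

lemma BadlyApproximable.div_intCast {x : ℝ} (hx : BadlyApproximable x) {m : ℤ} (hm : m ≠ 0) :
    BadlyApproximable (x / m) := by
  obtain ⟨c, hc, hbad⟩ := hx
  have hm' : (0 : ℝ) < |(m : ℝ)| := by positivity
  refine ⟨c / |(m : ℝ)|, by positivity, fun p q hq => ?_⟩
  have hsplit : x / m - p / q = (x - ((m * p : ℤ) : ℝ) / q) / m := by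
    push_cast
    field_simp
  rw [hsplit, abs_div, div_right_comm]
  gcongr
  exact hbad (m * p) q hq

lemma one_div_mul_le_abs_div_sub_div {p q a b : ℤ} (hq : 0 < q) (hb : 0 < b)
    (hne : (p : ℝ) / q ≠ a / b) : 1 / ((q : ℝ) * b) ≤ |(p : ℝ) / q - a / b| := by
  have hq' : (0 : ℝ) < q := mod_cast hq
  have hb' : (0 : ℝ) < b := mod_cast hb
  have hnum : p * b - a * q ≠ 0 := by
    contrapose! hne
    rw [div_eq_div_iff hq'.ne' hb'.ne']
    exact_mod_cast sub_eq_zero.1 hne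
  have hdiff : (p : ℝ) / q - a / b = ((p * b - a * q : ℤ) : ℝ) / (q * b) := by
    push_cast
    field_simp
  rw [hdiff, abs_div, abs_of_pos (mul_pos hq' hb'), ← Int.cast_abs]
  gcongr
  exact_mod_cast Int.one_le_abs hnum

namespace Irrational

variable {v : ℝ}

lemma one_div_four_mul_sq_le_abs_sub (hv : Irrational v) {p q : ℤ} {n : ℕ} (hq : 0 < q)
    (hlo : contDen v (n + 1) ≤ 2 * q) (hhi : 2 * q < contDen v (n + 2))
    (hne : (p : ℝ) / q ≠ contNum v (n + 1) / contDen v (n + 1)) :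
    1 / (4 * (q : ℝ) ^ 2) ≤ |v - p / q| := by
  have hq' : (0 : ℝ) < q := mod_cast hq
  have hD : (0 : ℝ) < contDen v (n + 1) := mod_cast hv.one_le_contDen_succ n
  have hlo' : (contDen v (n + 1) : ℝ) ≤ 2 * q := mod_cast hlo
  have hhi' : 2 * (q : ℝ) < contDen v (n + 2) := mod_cast hhi
  have hsep := one_div_mul_le_abs_div_sub_div hq (hv.one_le_contDen_succ n) hne
  have hclose : |v - contNum v (n + 1) / contDen v (n + 1)|
      ≤ 1 / ((contDen v (n + 1) : ℝ) * (2 * q)) :=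
    (hv.abs_sub_convergent_le n).trans (by gcongr)
  have htri := abs_sub_le ((p : ℝ) / q) v (contNum v (n + 1) / contDen v (n + 1))
  rw [abs_sub_comm _ v] at htri
  calc 1 / (4 * (q : ℝ) ^ 2) ≤ 1 / (2 * q * contDen v (n + 1)) :=
        one_div_le_one_div_of_le (by positivity) (by nlinarith)
    _ = 1 / (q * contDen v (n + 1)) - 1 / (contDen v (n + 1) * (2 * q)) := by
        field_simp
        ring
    _ ≤ |v - p / q| := by linarith

lemma badlyApproximable (hv : Irrational v) (h : BddPartialQuotients v) :
    BadlyApproximable v := by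
  obtain ⟨K, hK⟩ := h
  have hK1 : (1 : ℝ) ≤ K := mod_cast (hv.one_le_cfrac_succ 0).trans (hK 1)
  refine ⟨1 / (4 * (K + 2)), by positivity, fun p q hq => ?_⟩
  obtain ⟨n, hlo, hhi⟩ := hv.exists_contDen_le_lt (M := 2 * q) (by omega)
  have hq' : (1 : ℝ) ≤ q := mod_cast hq
  by_cases hpq : (p : ℝ) / q = contNum v (n + 1) / contDen v (n + 1)
  · have hlo' : (contDen v (n + 1) : ℝ) ≤ 2 * q := mod_cast hlo
    have hD : (1 : ℝ) ≤ contDen v (n + 1) := mod_cast hv.one_le_contDen_succ n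
    have ha : (cfrac v (n + 1) : ℝ) ≤ K := mod_cast hK (n + 1)
    have ha1 : (1 : ℝ) ≤ cfrac v (n + 1) := mod_cast hv.one_le_cfrac_succ n
    rw [hpq]
    calc 1 / (4 * ((K : ℝ) + 2)) / (q : ℝ) ^ 2 = 1 / ((K + 2) * (2 * q) * (2 * q)) := by
          field_simp
          ring
      _ ≤ 1 / ((cfrac v (n + 1) + 2) * contDen v (n + 1) * contDen v (n + 1)) :=
          one_div_le_one_div_of_le (by positivity) (by gcongr)
      _ ≤ _ := hv.one_div_le_abs_sub_convergent n
  · refine le_trans ?_ (hv.one_div_four_mul_sq_le_abs_sub hq hlo hhi hpq)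
    rw [div_div]
    gcongr
    linarith

lemma bddPartialQuotients (hv : Irrational v) (h : BadlyApproximable v) :
    BddPartialQuotients v := by
  obtain ⟨c, hc, hbad⟩ := h
  refine ⟨max (cfrac v 0) ⌈1 / c⌉, fun i => ?_⟩
  obtain _ | n := i
  · exact le_max_left _ _
  have hD : (0 : ℝ) < contDen v (n + 1) := mod_cast hv.one_le_contDen_succ n
  have ha : (0 : ℝ) < cfrac v (n + 1) := mod_cast hv.one_le_cfrac_succ n
  have happrox := (hbad _ _ (hv.one_le_contDen_succ n)).trans (hv.abs_sub_convergent_le' n)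
  rw [div_le_div_iff₀ (by positivity) (by positivity)] at happrox
  have hac : (cfrac v (n + 1) : ℝ) ≤ 1 / c := by
    rw [le_div_iff₀ hc, mul_comm]
    refine le_of_mul_le_mul_right ?_ (pow_pos hD 2)
    convert happrox using 1; ring
  exact (Int.cast_le.1 (hac.trans (Int.le_ceil _))).trans (le_max_right _ _)

lemma bddPartialQuotients_iff_badlyApproximable (hv : Irrational v) :
    BddPartialQuotients v ↔ BadlyApproximable v :=
  ⟨hv.badlyApproximable, hv.bddPartialQuotients⟩

end Irrational

/-- If an irrational `α` has bounded partial quotients, then so does `α/2`. -/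
theorem stmt18 (α : ℝ) (hirr : Irrational α) (h : BddPartialQuotients α) :
    BddPartialQuotients (α / 2) := by
  have hirr2 : Irrational (α / 2) := by simpa using hirr.div_natCast two_ne_zero
  rw [hirr2.bddPartialQuotients_iff_badlyApproximable]
  simpa using (hirr.bddPartialQuotients_iff_badlyApproximable.1 h).div_intCast two_ne_zero
end
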